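/- Let p be a positive integer, let m_1, …, m_p and n_1, …, n_p be positive integers, set d = m_1 n_1 + ⋯ + m_p n_p and N = n_1² + ⋯ + n_p², and set N_1 = 0 and N_ℓ = n_1² + ⋯ + n_{ℓ−1}² for ℓ ∈ {2,…,p}. Index ℂ^d by triples (ℓ, a, b) with ℓ ∈ {1,…,p}, a ∈ {1,…,m_ℓ}, b ∈ {1,…,n_ℓ}, and define Φ : M_d(ℂ) → M_d(ℂ) by Φ(X)((ℓ,a,b),(ℓ',a',b')) = δ_{ℓ,ℓ'}·δ_{b,b'}·(1/n_ℓ)·Σ_{c=1}^{n_ℓ} X((ℓ,a,c),(ℓ,a',c)). For each k ∈ {1,…,N} and ℓ ∈ {1,…,p} define U_{k,ℓ} ∈ M_{n_ℓ}(ℂ) by U_{k,ℓ}(a,b) = (1/n_ℓ) Σ_{c=1}^{n_ℓ} exp(2πi·c(b−a)/n_ℓ)·exp(2πi·k(N_ℓ+(a−1)n_ℓ+c)/N), and define U_k ∈ M_d(ℂ) blockwise by U_k((ℓ,a,b),(ℓ',a',b')) = δ_{ℓ,ℓ'}·δ_{a,a'}·U_{k,ℓ}(b,b'). Then each U_k is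 unitary, and Φ(X) = (1/N) Σ_{k=1}^{N} U_k X U_kᴴ for every X ∈ M_d(ℂ). -/

import Mathlib

open Matrix BigOperators

/-!
The block `U_{k,ℓ}` factors as `D F⋆ D' F`, where `F` is the normalised discrete Fourier matrix of
size `n_ℓ` and `D`, `D'` are diagonal matrices of roots of unity; so it is unitary, and so is
`U_k = ⊕_ℓ 1_{m_ℓ} ⊗ U_{k,ℓ}`.

In `U_{k,ℓ}(a, b)` the Fourier index `c` carries the phase `exp(2πi k r / N)` with
`r = N_ℓ + (a - 1) n_ℓ + c`, and `(ℓ, a, c) ↦ r` is a bijection onto `{1, …, N}`. Hence, by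
orthogonality of the characters of `ℤ/N`, `∑_k U_{k,ℓ}(a, b) conj U_{k,ℓ'}(a', b')` vanishes unless
`ℓ = ℓ'` and `a = a'`; the remaining Fourier sum over `c` then forces `b = b'` and gives `N / n_ℓ`.
Substituted into the entries of `∑_k U_k X U_kᴴ`, this leaves exactly `N · Φ(X)`.
-/

open Complex Finset
open scoped Kronecker Real

noncomputable def expFrac (M : ℕ) (t : ℤ) : ℂ := exp (2 * π * I * t / M)

theorem expFrac_add (M : ℕ) (s t : ℤ) : expFrac M (s + t) = expFrac M s * expFrac M t := by
  simp only [expFrac, ← exp_add]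
  congr 1
  push_cast
  ring

theorem star_expFrac (M : ℕ) (t : ℤ) : star (expFrac M t) = expFrac M (-t) := by
  rw [expFrac, expFrac, star_def, ← exp_conj]
  congr 1
  simp only [map_div₀, map_mul, conj_ofReal, conj_I, map_intCast, map_natCast, map_ofNat]
  push_cast
  ring

theorem expFrac_eq_zpow (M : ℕ) (t : ℤ) : expFrac M t = exp (2 * π * I / M) ^ t := by
  rw [expFrac, ← exp_int_mul]
  ring_nf

theorem expFrac_eq_one_iff {M : ℕ} (hM : M ≠ 0) (t : ℤ) : expFrac M t = 1 ↔ (M : ℤ) ∣ t := by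
  rw [expFrac_eq_zpow, (isPrimitiveRoot_exp M hM).zpow_eq_one_iff_dvd]

theorem sum_expFrac_mul (M : ℕ) (t : ℤ) :
    ∑ x : Fin M, expFrac M (x * t) = if (M : ℤ) ∣ t then (M : ℂ) else 0 := by
  rcases eq_or_ne M 0 with rfl | hM
  · simp
  have hpow (x : ℕ) : expFrac M (x * t) = expFrac M t ^ x := by
    rw [expFrac_eq_zpow, expFrac_eq_zpow, ← zpow_natCast, ← _root_.zpow_mul, mul_comm t]
  simp only [hpow, Fin.sum_univ_eq_sum_range (expFrac M t ^ ·)]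
  split_ifs with hdvd
  · simp [(expFrac_eq_one_iff hM t).2 hdvd]
  · rw [geom_sum_eq (mt (expFrac_eq_one_iff hM t).1 hdvd), ← hpow,
      (expFrac_eq_one_iff hM _).2 (dvd_mul_right _ _), sub_self, zero_div]

theorem sum_expFrac_succ_mul_sub {M : ℕ} (a b : Fin M) :
    ∑ x : Fin M, expFrac M ((x + 1) * (b - a)) = if a = b then (M : ℂ) else 0 := by
  have hM : M ≠ 0 := a.pos.ne'
  have hdvd : (M : ℤ) ∣ b - a ↔ a = b := by
    refine ⟨fun h => ?_, fun h => by simp [h]⟩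
    have := Int.eq_zero_of_abs_lt_dvd h (abs_lt.2 ⟨by omega, by omega⟩)
    omega
  simp only [add_mul, one_mul, expFrac_add, ← Finset.sum_mul, sum_expFrac_mul, hdvd]
  split_ifs with hab
  · simp [hab, expFrac]
  · rw [zero_mul]

theorem star_expFrac_mul_self (M : ℕ) (t : ℤ) : star (expFrac M t) * expFrac M t = 1 := by
  rw [star_expFrac, ← expFrac_add, neg_add_cancel]
  simp [expFrac]

theorem diagonal_expFrac_mem_unitaryGroup {ι : Type*} [Fintype ι] [DecidableEq ι] (M : ℕ)
    (t : ι → ℤ) : diagonal (fun i => expFrac M (t i)) ∈ unitaryGroup ι ℂ := by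
  rw [mem_unitaryGroup_iff', star_eq_conjTranspose, diagonal_conjTranspose, diagonal_mul_diagonal]
  simp only [Pi.star_apply, star_expFrac_mul_self, diagonal_one]

noncomputable def dftMatrix (n : ℕ) : Matrix (Fin n) (Fin n) ℂ :=
  of fun c b => expFrac n ((c + 1) * b)

theorem conjTranspose_dftMatrix_mul_self (n : ℕ) : (dftMatrix n)ᴴ * dftMatrix n = (n : ℂ) • 1 := by
  ext a b
  simp only [mul_apply, conjTranspose_apply, dftMatrix, of_apply, star_expFrac, ← expFrac_add,
    Matrix.smul_apply, one_apply, smul_eq_mul, mul_ite, mul_one, mul_zero]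
  rw [← sum_expFrac_succ_mul_sub a b]
  congr! 2
  ring

theorem star_inv_sqrt_mul_inv_sqrt (n : ℕ) :
    star ((√n : ℝ) : ℂ)⁻¹ * ((√n : ℝ) : ℂ)⁻¹ = (n : ℂ)⁻¹ := by
  rw [star_inv₀, Complex.star_def, conj_ofReal, ← mul_inv, ← ofReal_mul,
    Real.mul_self_sqrt (Nat.cast_nonneg n), ofReal_natCast]

theorem inv_sqrt_smul_dftMatrix_mem_unitaryGroup (n : ℕ) :
    ((√n : ℝ) : ℂ)⁻¹ • dftMatrix n ∈ unitaryGroup (Fin n) ℂ := by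
  rw [mem_unitaryGroup_iff']
  rcases eq_or_ne n 0 with rfl | hn
  · exact Subsingleton.elim _ _
  rw [star_smul, star_eq_conjTranspose, smul_mul_smul_comm, conjTranspose_dftMatrix_mul_self,
    star_inv_sqrt_mul_inv_sqrt, inv_smul_smul₀ (Nat.cast_ne_zero.2 hn)]

/-- `phaseBlock n_ℓ N N_ℓ k` is the paper's `U_{k+1,ℓ}`, with `a`, `b`, `c` counted from `0`. -/
noncomputable def phaseBlock (n N s k : ℕ) : Matrix (Fin n) (Fin n) ℂ :=
  of fun a b => (n : ℂ)⁻¹ * ∑ c : Fin n,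
    expFrac n ((c + 1) * (b - a)) * expFrac N ((k + 1) * (s + a * n + c + 1))

theorem phaseBlock_eq_mul (n N s k : ℕ) :
    phaseBlock n N s k =
      diagonal (fun a : Fin n => expFrac N ((k + 1) * (s + a * n))) *
        star (((√n : ℝ) : ℂ)⁻¹ • dftMatrix n) *
        diagonal (fun c : Fin n => expFrac N ((k + 1) * (c + 1))) *
        (((√n : ℝ) : ℂ)⁻¹ • dftMatrix n) := by
  ext a b
  simp only [phaseBlock, of_apply, mul_apply, diagonal_apply, ite_mul, mul_ite, zero_mul, mul_zero,
    Finset.sum_ite_eq, Finset.sum_ite_eq', Finset.mem_univ, if_true, star_apply,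
    Matrix.smul_apply, smul_eq_mul, dftMatrix, star_mul', star_expFrac, Finset.mul_sum]
  refine Finset.sum_congr rfl fun c _ => ?_
  have hsplit :
      ((k : ℤ) + 1) * (s + a * n + c + 1) = (k + 1) * (s + a * n) + (k + 1) * (c + 1) := by
    ring
  rw [← star_inv_sqrt_mul_inv_sqrt, hsplit, expFrac_add, mul_sub, sub_eq_neg_add, expFrac_add]
  ring

theorem phaseBlock_mem_unitaryGroup (n N s k : ℕ) :
    phaseBlock n N s k ∈ unitaryGroup (Fin n) ℂ := by
  rw [phaseBlock_eq_mul]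
  have hG := inv_sqrt_smul_dftMatrix_mem_unitaryGroup n
  exact mul_mem (mul_mem (mul_mem (diagonal_expFrac_mem_unitaryGroup _ _) (Unitary.star_mem hG))
    (diagonal_expFrac_mem_unitaryGroup _ _)) hG

theorem sum_phaseBlock_mul_star (n n' N s s' : ℕ) (β γ : Fin n) (β' γ' : Fin n') :
    ∑ k : Fin N, phaseBlock n N s k β γ * star (phaseBlock n' N s' k β' γ') =
      (n : ℂ)⁻¹ * (n' : ℂ)⁻¹ * ∑ c : Fin n, ∑ c' : Fin n',
        expFrac n ((c + 1) * (γ - β)) * expFrac n' (-((c' + 1) * (γ' - β'))) *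
          ∑ k : Fin N, expFrac N ((k + 1) * ((s + β * n + c : ℕ) - (s' + β' * n' + c' : ℕ))) := by
  simp only [phaseBlock, of_apply, star_mul', star_sum, star_expFrac, Finset.mul_sum,
    Finset.sum_mul, star_inv₀, star_natCast]
  rw [Finset.sum_comm_cycle]
  refine Finset.sum_congr rfl fun c _ => ?_
  rw [Finset.sum_comm]
  refine Finset.sum_congr rfl fun c' _ => ?_
  refine Finset.sum_congr rfl fun k _ => ?_
  have hphase : ((k : ℤ) + 1) * ((s + β * n + c : ℕ) - (s' + β' * n' + c' : ℕ)) =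
      (k + 1) * (s + β * n + c + 1) + -((k + 1) * (s' + β' * n' + c' + 1)) := by
    push_cast
    ring
  rw [hphase, expFrac_add]
  ring

section BlockKronecker

variable {ι R : Type*} [Fintype ι] [DecidableEq ι] [CommRing R] [StarRing R]

theorem blockDiagonal'_mem_unitaryGroup {n : ι → Type*} [∀ i, Fintype (n i)]
    [∀ i, DecidableEq (n i)] {A : ∀ i, Matrix (n i) (n i) R}
    (hA : ∀ i, A i ∈ unitaryGroup (n i) R) : blockDiagonal' A ∈ unitaryGroup ((i : ι) × n i) R := by
  rw [mem_unitaryGroup_iff, star_eq_conjTranspose, blockDiagonal'_conjTranspose,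
    ← blockDiagonal'_mul]
  simp only [← star_eq_conjTranspose, fun i => mem_unitaryGroup_iff.1 (hA i)]
  exact blockDiagonal'_one

theorem kronecker_mem_unitaryGroup {α β : Type*} [Fintype α] [DecidableEq α] [Fintype β]
    [DecidableEq β] {A : Matrix α α R} {B : Matrix β β R} (hA : A ∈ unitaryGroup α R)
    (hB : B ∈ unitaryGroup β R) : A ⊗ₖ B ∈ unitaryGroup (α × β) R := by
  rw [mem_unitaryGroup_iff] at *
  rw [star_eq_conjTranspose, conjTranspose_kronecker, ← mul_kronecker_mul, ← star_eq_conjTranspose,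
    ← star_eq_conjTranspose, hA, hB, one_kronecker_one]

variable {m n : ι → Type*} [∀ i, Fintype (m i)] [∀ i, DecidableEq (m i)] [∀ i, Fintype (n i)]

theorem blockDiagonal'_one_kronecker_mul_mul_conjTranspose_apply (A : ∀ i, Matrix (n i) (n i) R)
    (X : Matrix ((i : ι) × (m i × n i)) ((i : ι) × (m i × n i)) R) (i j : ι) (a : m i) (b : n i)
    (a' : m j) (b' : n j) :
    (blockDiagonal' (fun i => (1 : Matrix (m i) (m i) R) ⊗ₖ A i) * X *
        (blockDiagonal' fun i => (1 : Matrix (m i) (m i) R) ⊗ₖ A i)ᴴ) ⟨i, (a, b)⟩ ⟨j, (a', b')⟩ =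
      ∑ c, ∑ c', A i b c * X ⟨i, (a, c)⟩ ⟨j, (a', c')⟩ * star (A j b' c') := by
  rw [Finset.sum_comm (β := R)]
  simp [mul_apply, Fintype.sum_sigma, blockDiagonal'_apply', kroneckerMap_apply, one_apply,
    Fintype.sum_prod_type, Finset.sum_mul, apply_ite star]

theorem sum_blockDiagonal'_one_kronecker_mul_mul_conjTranspose_apply {κ : Type*} [Fintype κ]
    (A : κ → ∀ i, Matrix (n i) (n i) R)
    (X : Matrix ((i : ι) × (m i × n i)) ((i : ι) × (m i × n i)) R) (i j : ι) (a : m i) (b : n i)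
    (a' : m j) (b' : n j) :
    (∑ k, blockDiagonal' (fun i => (1 : Matrix (m i) (m i) R) ⊗ₖ A k i) * X *
        (blockDiagonal' fun i => (1 : Matrix (m i) (m i) R) ⊗ₖ A k i)ᴴ) ⟨i, (a, b)⟩ ⟨j, (a', b')⟩ =
      ∑ c, ∑ c', X ⟨i, (a, c)⟩ ⟨j, (a', c')⟩ * ∑ k, A k i b c * star (A k j b' c') := by
  simp only [Matrix.sum_apply, blockDiagonal'_one_kronecker_mul_mul_conjTranspose_apply,
    Finset.mul_sum]
  rw [← Finset.sum_comm_cycle (β := R)]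
  refine Finset.sum_congr rfl fun k _ => Finset.sum_congr rfl fun c _ => Finset.sum_congr rfl
    fun c' _ => ?_
  ring

end BlockKronecker

section MixingUnitaries

variable {p : ℕ} (m n : Fin p → ℕ)

def blockOffset (ℓ : Fin p) : ℕ := ∑ j ∈ Finset.univ.filter (fun j : Fin p => j < ℓ), n j ^ 2

def blockPos : ((ℓ : Fin p) × (Fin (n ℓ) × Fin (n ℓ))) ≃ Fin (∑ ℓ, n ℓ ^ 2) :=
  (Equiv.sigmaCongrRight fun ℓ => finProdFinEquiv.trans (finCongr (sq (n ℓ)).symm)).trans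
    finSigmaFinEquiv

theorem blockPos_val (ℓ : Fin p) (a c : Fin (n ℓ)) :
    (blockPos n ⟨ℓ, (a, c)⟩ : ℕ) = blockOffset n ℓ + a * n ℓ + c := by
  have hfilter : univ.filter (fun j : Fin p => j < ℓ) = univ.map (Fin.castLEEmb ℓ.2.le) := by
    ext j
    simp only [mem_filter, mem_univ, true_and, mem_map, Fin.coe_castLEEmb]
    exact ⟨fun h => ⟨⟨j, h⟩, rfl⟩, by rintro ⟨i, rfl⟩; exact i.2⟩
  simp only [blockPos, finProdFinEquiv, Equiv.trans_apply, Equiv.sigmaCongrRight_apply,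
    Equiv.coe_fn_mk, finCongr_apply, Fin.cast_mk, finSigmaFinEquiv_apply, blockOffset, hfilter,
    sum_map, Fin.castLEEmb_apply]
  ring

noncomputable def unitaryBlock (k : ℕ) (ℓ : Fin p) :
    Matrix (Fin (n ℓ)) (Fin (n ℓ)) ℂ :=
  phaseBlock (n ℓ) (∑ j, n j ^ 2) (blockOffset n ℓ) k

theorem sum_unitaryBlock_mul_star (ℓ ℓ' : Fin p) (β γ : Fin (n ℓ))
    (β' γ' : Fin (n ℓ')) :
    ∑ k : Fin (∑ ℓ, n ℓ ^ 2), unitaryBlock n k ℓ β γ * star (unitaryBlock n k ℓ' β' γ') =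
      if (⟨ℓ, (β, γ)⟩ : (ℓ : Fin p) × (Fin (n ℓ) × Fin (n ℓ))) = ⟨ℓ', (β', γ')⟩ then
        ((∑ ℓ, n ℓ ^ 2 : ℕ) : ℂ) / n ℓ else 0 := by
  have horth (c : Fin (n ℓ)) (c' : Fin (n ℓ')) :
      ∑ k : Fin (∑ ℓ, n ℓ ^ 2), expFrac (∑ ℓ, n ℓ ^ 2) ((k + 1) *
        ((blockOffset n ℓ + β * n ℓ + c : ℕ) - (blockOffset n ℓ' + β' * n ℓ' + c' : ℕ))) =
      if (⟨ℓ', (β', c')⟩ : (ℓ : Fin p) × (Fin (n ℓ) × Fin (n ℓ))) = ⟨ℓ, (β, c)⟩ then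
        ((∑ ℓ, n ℓ ^ 2 : ℕ) : ℂ) else 0 := by
    rw [← blockPos_val, ← blockPos_val, sum_expFrac_succ_mul_sub]
    simp only [(blockPos n).injective.eq_iff]
  simp only [unitaryBlock, sum_phaseBlock_mul_star, horth]
  rcases eq_or_ne ℓ ℓ' with rfl | hℓ
  · simp only [Sigma.mk.inj_iff, heq_eq_eq, true_and, Prod.mk.injEq, mul_ite, mul_zero, ite_and]
    rcases eq_or_ne β β' with rfl | hβ
    · have hterm (c : Fin (n ℓ)) : expFrac (n ℓ) ((c + 1) * (γ - β)) *
          expFrac (n ℓ) (-((c + 1) * (γ' - β))) = expFrac (n ℓ) ((c + 1) * (γ - γ')) := by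
        rw [← expFrac_add]
        ring_nf
      simp only [Finset.sum_ite_eq', Finset.mem_univ, if_true, hterm, ← Finset.sum_mul,
        sum_expFrac_succ_mul_sub, eq_comm (a := γ')]
      have hn : (n ℓ : ℂ) ≠ 0 := Nat.cast_ne_zero.2 γ.pos.ne'
      split_ifs
      · field_simp
      · simp
    · simp [hβ, hβ.symm]
  · simp [hℓ, hℓ.symm]

noncomputable def mixingUnitary (k : ℕ) :
    Matrix ((ℓ : Fin p) × (Fin (m ℓ) × Fin (n ℓ))) ((ℓ : Fin p) × (Fin (m ℓ) × Fin (n ℓ))) ℂ :=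
  blockDiagonal' fun ℓ => (1 : Matrix (Fin (m ℓ)) (Fin (m ℓ)) ℂ) ⊗ₖ unitaryBlock n k ℓ

theorem mixingUnitary_mem_unitaryGroup (k : ℕ) :
    mixingUnitary m n k ∈ unitaryGroup ((ℓ : Fin p) × (Fin (m ℓ) × Fin (n ℓ))) ℂ :=
  blockDiagonal'_mem_unitaryGroup fun _ =>
    kronecker_mem_unitaryGroup (one_mem _) (phaseBlock_mem_unitaryGroup _ _ _ _)

theorem smul_sum_conj_mixingUnitary_apply_self
    (X : Matrix ((ℓ : Fin p) × (Fin (m ℓ) × Fin (n ℓ))) ((ℓ : Fin p) × (Fin (m ℓ) × Fin (n ℓ))) ℂ)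
    (ℓ : Fin p) (a a' : Fin (m ℓ)) (b b' : Fin (n ℓ)) :
    ((1 / ((∑ ℓ, n ℓ ^ 2 : ℕ) : ℂ)) • ∑ k : Fin (∑ ℓ, n ℓ ^ 2),
        mixingUnitary m n k * X * (mixingUnitary m n k)ᴴ) ⟨ℓ, (a, b)⟩ ⟨ℓ, (a', b')⟩ =
      if b = b' then 1 / (n ℓ : ℂ) * ∑ c, X ⟨ℓ, (a, c)⟩ ⟨ℓ, (a', c)⟩ else 0 := by
  simp only [Matrix.smul_apply, mixingUnitary,
    sum_blockDiagonal'_one_kronecker_mul_mul_conjTranspose_apply, sum_unitaryBlock_mul_star]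
  have hN : 0 < ∑ j, n j ^ 2 := (pow_pos b.pos 2).trans_le
    (Finset.single_le_sum (f := fun j => n j ^ 2) (fun j _ => Nat.zero_le _) (mem_univ ℓ))
  have hNC : (∑ j, (n j : ℂ) ^ 2) ≠ 0 := by exact_mod_cast hN.ne'
  rcases eq_or_ne b b' with rfl | hb
  · simp only [Sigma.mk.inj_iff, heq_eq_eq, Prod.mk.injEq, true_and,
      if_true, mul_ite, mul_zero, Finset.sum_ite_eq, Finset.mem_univ, smul_eq_mul, Finset.mul_sum]
    refine Finset.sum_congr rfl fun c _ => ?_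
    push_cast
    field_simp
  · simp [hb]

theorem smul_sum_conj_mixingUnitary_apply_of_ne
    (X : Matrix ((ℓ : Fin p) × (Fin (m ℓ) × Fin (n ℓ))) ((ℓ : Fin p) × (Fin (m ℓ) × Fin (n ℓ))) ℂ)
    {ℓ ℓ' : Fin p} (hℓ : ℓ ≠ ℓ') (a : Fin (m ℓ)) (b : Fin (n ℓ)) (a' : Fin (m ℓ'))
    (b' : Fin (n ℓ')) :
    ((1 / ((∑ ℓ, n ℓ ^ 2 : ℕ) : ℂ)) • ∑ k : Fin (∑ ℓ, n ℓ ^ 2),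
        mixingUnitary m n k * X * (mixingUnitary m n k)ᴴ) ⟨ℓ, (a, b)⟩ ⟨ℓ', (a', b')⟩ = 0 := by
  simp only [Matrix.smul_apply, mixingUnitary,
    sum_blockDiagonal'_one_kronecker_mul_mul_conjTranspose_apply, sum_unitaryBlock_mul_star]
  simp [hℓ]

end MixingUnitaries

theorem stmt_11_general (p : ℕ)
    (m nn : Fin p → ℕ)
    (N : ℕ) (hN : N = ∑ ℓ : Fin p, (nn ℓ) ^ 2)
    (Nl : Fin p → ℕ)
    (hNl : ∀ ℓ : Fin p, Nl ℓ = ∑ j ∈ Finset.univ.filter (fun j : Fin p => j < ℓ), (nn j) ^ 2)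
    (Φ : Matrix ((ℓ : Fin p) × (Fin (m ℓ) × Fin (nn ℓ))) ((ℓ : Fin p) × (Fin (m ℓ) × Fin (nn ℓ))) ℂ →
         Matrix ((ℓ : Fin p) × (Fin (m ℓ) × Fin (nn ℓ))) ((ℓ : Fin p) × (Fin (m ℓ) × Fin (nn ℓ))) ℂ)
    (hΦ : ∀ X (i i' : (ℓ : Fin p) × (Fin (m ℓ) × Fin (nn ℓ))),
      Φ X i i' =
        if h : i.1 = i'.1 then
          (if Fin.cast (congrArg nn h) i.2.2 = i'.2.2 then
            (1 / (nn i'.1 : ℂ)) *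
              ∑ c : Fin (nn i'.1),
                X ⟨i'.1, (Fin.cast (congrArg m h) i.2.1, c)⟩ ⟨i'.1, (i'.2.1, c)⟩
          else 0)
        else 0)
    (Ublk : Fin N → (ℓ : Fin p) → Matrix (Fin (nn ℓ)) (Fin (nn ℓ)) ℂ)
    (hUblk : ∀ (k : Fin N) (ℓ : Fin p) (a b : Fin (nn ℓ)),
      Ublk k ℓ a b = (1 / (nn ℓ : ℂ)) *
        ∑ c : Fin (nn ℓ),
          Complex.exp (2 * (Real.pi : ℂ) * Complex.I *
              (((c.val : ℂ) + 1) * ((b.val : ℂ) - (a.val : ℂ))) / (nn ℓ : ℂ)) *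
          Complex.exp (2 * (Real.pi : ℂ) * Complex.I * ((k.val : ℂ) + 1) *
              ((Nl ℓ : ℂ) + (a.val : ℂ) * (nn ℓ : ℂ) + ((c.val : ℂ) + 1)) / (N : ℂ)))
    (U : Fin N →
      Matrix ((ℓ : Fin p) × (Fin (m ℓ) × Fin (nn ℓ))) ((ℓ : Fin p) × (Fin (m ℓ) × Fin (nn ℓ))) ℂ)
    (hU : ∀ (k : Fin N) (i i' : (ℓ : Fin p) × (Fin (m ℓ) × Fin (nn ℓ))),
      U k i i' =
        if h : i.1 = i'.1 then
          (if Fin.cast (congrArg m h) i.2.1 = i'.2.1 then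
            Ublk k i'.1 (Fin.cast (congrArg nn h) i.2.2) i'.2.2
          else 0)
        else 0) :
    (∀ k, (U k)ᴴ * U k = 1 ∧ U k * (U k)ᴴ = 1) ∧
    (∀ X, Φ X = (1 / (N : ℂ)) • ∑ k, U k * X * (U k)ᴴ) := by
  subst hN
  obtain rfl : Nl = blockOffset nn := funext hNl
  obtain rfl : Ublk = fun k : Fin _ => unitaryBlock nn k := by
    funext k ℓ
    ext a b
    rw [hUblk, unitaryBlock, phaseBlock, of_apply, one_div]
    refine congrArg _ (Finset.sum_congr rfl fun c _ => ?_)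
    congr 1 <;> rw [expFrac] <;> congr 1 <;> push_cast <;> ring
  obtain rfl : U = fun k : Fin _ => mixingUnitary m nn k := by
    funext k
    ext ⟨ℓ, a, b⟩ ⟨ℓ', a', b'⟩
    rw [hU, mixingUnitary]
    rcases eq_or_ne ℓ ℓ' with rfl | hℓ
    · simp [kroneckerMap_apply, one_apply]
    · simp [hℓ, blockDiagonal'_apply_ne]
  refine ⟨fun k => ?_, fun X => ?_⟩
  · have hk := mixingUnitary_mem_unitaryGroup m nn k
    exact ⟨mem_unitaryGroup_iff'.1 hk, mem_unitaryGroup_iff.1 hk⟩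
  ext ⟨ℓ, a, b⟩ ⟨ℓ', a', b'⟩
  rcases eq_or_ne ℓ ℓ' with rfl | hℓ
  · rw [smul_sum_conj_mixingUnitary_apply_self, hΦ]
    simp
  · rw [smul_sum_conj_mixingUnitary_apply_of_ne m nn X hℓ, hΦ, dif_neg hℓ]

/-- Explicit minimal mixed-unitary decomposition of the channel
`Φ = (𝟙_{M_{m₁}} ⊗ Ω_{n₁}) ⊕ ⋯ ⊕ (𝟙_{M_{m_p}} ⊗ Ω_{n_p})` on `M_d(ℂ)`
(`d = Σ m_ℓ n_ℓ`, indices given by triples `(ℓ,a,b)`) as the average of the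
`N = Σ n_ℓ²` explicitly constructed block-diagonal unitaries `U_k`. -/
theorem stmt_11 (p : ℕ) (hp : 0 < p)
    (m nn : Fin p → ℕ) (hm : ∀ ℓ, 0 < m ℓ) (hnn : ∀ ℓ, 0 < nn ℓ)
    (N : ℕ) (hN : N = ∑ ℓ : Fin p, (nn ℓ) ^ 2)
    (Nl : Fin p → ℕ)
    (hNl : ∀ ℓ : Fin p, Nl ℓ = ∑ j ∈ Finset.univ.filter (fun j : Fin p => j < ℓ), (nn j) ^ 2)
    (Φ : Matrix ((ℓ : Fin p) × (Fin (m ℓ) × Fin (nn ℓ))) ((ℓ : Fin p) × (Fin (m ℓ) × Fin (nn ℓ))) ℂ →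
         Matrix ((ℓ : Fin p) × (Fin (m ℓ) × Fin (nn ℓ))) ((ℓ : Fin p) × (Fin (m ℓ) × Fin (nn ℓ))) ℂ)
    (hΦ : ∀ X (i i' : (ℓ : Fin p) × (Fin (m ℓ) × Fin (nn ℓ))),
      Φ X i i' =
        if h : i.1 = i'.1 then
          (if Fin.cast (congrArg nn h) i.2.2 = i'.2.2 then
            (1 / (nn i'.1 : ℂ)) *
              ∑ c : Fin (nn i'.1),
                X ⟨i'.1, (Fin.cast (congrArg m h) i.2.1, c)⟩ ⟨i'.1, (i'.2.1, c)⟩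
          else 0)
        else 0)
    (Ublk : Fin N → (ℓ : Fin p) → Matrix (Fin (nn ℓ)) (Fin (nn ℓ)) ℂ)
    (hUblk : ∀ (k : Fin N) (ℓ : Fin p) (a b : Fin (nn ℓ)),
      Ublk k ℓ a b = (1 / (nn ℓ : ℂ)) *
        ∑ c : Fin (nn ℓ),
          Complex.exp (2 * (Real.pi : ℂ) * Complex.I *
              (((c.val : ℂ) + 1) * ((b.val : ℂ) - (a.val : ℂ))) / (nn ℓ : ℂ)) *
          Complex.exp (2 * (Real.pi : ℂ) * Complex.I * ((k.val : ℂ) + 1) *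
              ((Nl ℓ : ℂ) + (a.val : ℂ) * (nn ℓ : ℂ) + ((c.val : ℂ) + 1)) / (N : ℂ)))
    (U : Fin N →
      Matrix ((ℓ : Fin p) × (Fin (m ℓ) × Fin (nn ℓ))) ((ℓ : Fin p) × (Fin (m ℓ) × Fin (nn ℓ))) ℂ)
    (hU : ∀ (k : Fin N) (i i' : (ℓ : Fin p) × (Fin (m ℓ) × Fin (nn ℓ))),
      U k i i' =
        if h : i.1 = i'.1 then
          (if Fin.cast (congrArg m h) i.2.1 = i'.2.1 then
            Ublk k i'.1 (Fin.cast (congrArg nn h) i.2.2) i'.2.2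
          else 0)
        else 0) :
    (∀ k, (U k)ᴴ * U k = 1 ∧ U k * (U k)ᴴ = 1) ∧
    (∀ X, Φ X = (1 / (N : ℂ)) • ∑ k, U k * X * (U k)ᴴ) :=
  stmt_11_general p m nn N hN Nl hNl Φ hΦ Ublk hUblk U hU
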